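/- Let N ≥ 1 and z ≠ q^{-n} for 1 ≤ n ≤ N. Then ∑_{n=1}^{N} [N choose n] (-1)^{n-1} z^n q^{n(n+1)/2} (q;q)_n / ((1-q^n)(zq;q)_n) = ∑_{n=1}^{N} z q^n/(1 - z q^n). (Finite analogue of Ramanujan's identity.) -/

import Mathlib

open Finset

/-- q-Pochhammer symbol (a;q)_n = ∏_{k=0}^{n-1} (1 - a q^k). -/
noncomputable def qP (a q : ℂ) (n : ℕ) : ℂ := ∏ k ∈ Finset.range n, (1 - a * q ^ k)

/-- Gaussian (q-)binomial coefficient [N choose n]_q. -/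
noncomputable def qBinom (q : ℂ) (N n : ℕ) : ℂ := qP q q N / (qP q q n * qP q q (N - n))

/-!
Write `t_m(z) = (-1)^m q^(m(m+1)/2) (q;q)_m z^m / (zq;q)_(m+1)`, so that the `n`-th summand on the
left is `z q^n t_(n-1)(z)`. By the q-Pascal rule `[N+1, n] = [N, n] + q^(N+1-n) [N, n-1]`, raising
`N` by one adds `z q^(N+1) ∑_(m ≤ N) [N, m] t_m(z)` to the left side, while the right side gains
`z q^(N+1) / (1 - z q^(N+1))`. So it suffices that `∑_(m ≤ M) [M, m] t_m(z) = 1 / (1 - z q^(M+1))`,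
which follows by induction on `M` from the other q-Pascal rule `[M+1, m] = q^m [M, m] + [M, m-1]`
and the contiguity relation `q^m t_m(z) + t_(m+1)(z) = t_m(zq)`.
-/

section qPochhammer

variable {a q : ℂ} {m n : ℕ}

lemma qP_zero (a q : ℂ) : qP a q 0 = 1 := prod_range_zero _

lemma qP_succ (a q : ℂ) (n : ℕ) : qP a q (n + 1) = qP a q n * (1 - a * q ^ n) :=
  prod_range_succ _ _

lemma qP_succ' (a q : ℂ) (n : ℕ) : qP a q (n + 1) = (1 - a) * qP (a * q) q n := by
  simp only [qP, prod_range_succ', pow_succ, pow_zero, mul_one, mul_assoc, mul_comm]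

lemma qP_ne_zero (h : ∀ k < n, a * q ^ k ≠ 1) : qP a q n ≠ 0 :=
  prod_ne_zero_iff.mpr fun k hk => sub_ne_zero.mpr (h k (mem_range.mp hk)).symm

lemma qP_ne_zero_of_le (hmn : m ≤ n) (h : qP a q n ≠ 0) : qP a q m ≠ 0 := by
  rw [qP, ← prod_range_mul_prod_Ico _ hmn] at h
  exact left_ne_zero_of_mul h

lemma one_sub_mul_pow_ne_zero (hq : ¬IsOfFinOrder q) (k : ℕ) : 1 - q * q ^ k ≠ 0 :=
  sub_ne_zero.mpr fun h => hq <| isOfFinOrder_iff_pow_eq_one.mpr ⟨k + 1, k.succ_pos, by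
    rw [pow_succ', ← h]⟩

lemma qP_self_ne_zero (hq : ¬IsOfFinOrder q) (n : ℕ) : qP q q n ≠ 0 :=
  prod_ne_zero_iff.mpr fun k _ => one_sub_mul_pow_ne_zero hq k

end qPochhammer

section qBinom

variable {q : ℂ} (hq : ¬IsOfFinOrder q)
include hq

lemma qBinom_zero_right (N : ℕ) : qBinom q N 0 = 1 := by
  rw [qBinom, qP_zero, one_mul, Nat.sub_zero, div_self (qP_self_ne_zero hq N)]

lemma qBinom_self (N : ℕ) : qBinom q N N = 1 := by
  rw [qBinom, Nat.sub_self, qP_zero, mul_one, div_self (qP_self_ne_zero hq N)]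

lemma qBinom_succ_succ {N k : ℕ} (hk : k < N) :
    qBinom q (N + 1) (k + 1) = qBinom q N k + q ^ (k + 1) * qBinom q N (k + 1) := by
  obtain ⟨j, rfl⟩ : ∃ j, N = k + j + 1 := ⟨N - k - 1, by omega⟩
  rw [qBinom, qBinom, qBinom, show k + j + 1 + 1 - (k + 1) = j + 1 by omega,
    show k + j + 1 - k = j + 1 by omega, show k + j + 1 - (k + 1) = j by omega,
    qP_succ q q (k + j + 1), qP_succ q q k, qP_succ q q j]
  have := qP_self_ne_zero hq k
  have := qP_self_ne_zero hq j
  have := one_sub_mul_pow_ne_zero hq k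
  have := one_sub_mul_pow_ne_zero hq j
  field_simp
  ring

lemma qBinom_succ_succ' {N k : ℕ} (hk : k < N) :
    qBinom q (N + 1) (k + 1) = qBinom q N (k + 1) + q ^ (N - k) * qBinom q N k := by
  obtain ⟨j, rfl⟩ : ∃ j, N = k + j + 1 := ⟨N - k - 1, by omega⟩
  rw [qBinom, qBinom, qBinom, show k + j + 1 + 1 - (k + 1) = j + 1 by omega,
    show k + j + 1 - k = j + 1 by omega, show k + j + 1 - (k + 1) = j by omega,
    qP_succ q q (k + j + 1), qP_succ q q k, qP_succ q q j]
  have := qP_self_ne_zero hq k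
  have := qP_self_ne_zero hq j
  have := one_sub_mul_pow_ne_zero hq k
  have := one_sub_mul_pow_ne_zero hq j
  field_simp
  ring

lemma sum_range_qBinom_succ (f : ℕ → ℂ) (M : ℕ) :
    ∑ m ∈ range (M + 2), qBinom q (M + 1) m * f m =
      ∑ m ∈ range (M + 1), qBinom q M m * (q ^ m * f m + f (m + 1)) := by
  have hpascal : ∑ m ∈ range M, qBinom q (M + 1) (m + 1) * f (m + 1) =
      ∑ m ∈ range M, (qBinom q M m * f (m + 1) + qBinom q M (m + 1) * (q ^ (m + 1) * f (m + 1))) :=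
    sum_congr rfl fun m hm => by rw [qBinom_succ_succ hq (mem_range.mp hm)]; ring
  rw [sum_range_succ', sum_range_succ, hpascal, sum_add_distrib]
  simp only [mul_add, sum_add_distrib]
  rw [sum_range_succ' (fun m => qBinom q M m * (q ^ m * f m)),
    sum_range_succ (fun m => qBinom q M m * f (m + 1))]
  simp only [qBinom_zero_right hq, qBinom_self hq, pow_zero]
  ring

lemma sum_range_qBinom_succ' (f : ℕ → ℂ) (M : ℕ) :
    ∑ m ∈ range (M + 2), qBinom q (M + 1) m * f m =
      ∑ m ∈ range (M + 1), qBinom q M m * (f m + q ^ (M - m) * f (m + 1)) := by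
  have hpascal : ∑ m ∈ range M, qBinom q (M + 1) (m + 1) * f (m + 1) =
      ∑ m ∈ range M, (qBinom q M (m + 1) * f (m + 1) + qBinom q M m * (q ^ (M - m) * f (m + 1))) :=
    sum_congr rfl fun m hm => by rw [qBinom_succ_succ' hq (mem_range.mp hm)]; ring
  rw [sum_range_succ', sum_range_succ, hpascal, sum_add_distrib]
  simp only [mul_add, sum_add_distrib]
  rw [sum_range_succ' (fun m => qBinom q M m * f m),
    sum_range_succ (fun m => qBinom q M m * (q ^ (M - m) * f (m + 1)))]
  simp only [qBinom_zero_right hq, qBinom_self hq, Nat.sub_self, pow_zero]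
  ring

end qBinom

lemma triangular_succ (m : ℕ) : (m + 1) * (m + 1 + 1) / 2 = m * (m + 1) / 2 + (m + 1) := by
  rw [show (m + 1) * (m + 1 + 1) = m * (m + 1) + 2 * (m + 1) by ring,
    Nat.add_mul_div_left _ _ two_pos]

noncomputable def ramanujanTerm (q z : ℂ) (m : ℕ) : ℂ :=
  (-1) ^ m * q ^ (m * (m + 1) / 2) * qP q q m * z ^ m / qP (z * q) q (m + 1)

noncomputable def ramanujanSummand (q z : ℂ) (n : ℕ) : ℂ :=
  (-1) ^ (n - 1) * z ^ n * q ^ (n * (n + 1) / 2) * qP q q n / ((1 - q ^ n) * qP (z * q) q n)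

section Ramanujan

variable {q z : ℂ}

-- The `n = 0` summand vanishes only through the junk value of division by `1 - q ^ 0 = 0`.
lemma ramanujanSummand_zero : ramanujanSummand q z 0 = 0 := by
  simp [ramanujanSummand]

lemma ramanujanSummand_succ (hq : ¬IsOfFinOrder q) (m : ℕ) :
    ramanujanSummand q z (m + 1) = z * q ^ (m + 1) * ramanujanTerm q z m := by
  have := one_sub_mul_pow_ne_zero hq m
  rw [ramanujanSummand, ramanujanTerm, Nat.add_sub_cancel, triangular_succ, qP_succ q q m,
    pow_succ' q m]
  field_simp
  ring

lemma ramanujanTerm_shift (m : ℕ) (h : qP (z * q) q (m + 2) ≠ 0) :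
    q ^ m * ramanujanTerm q z m + ramanujanTerm q z (m + 1) = ramanujanTerm q (z * q) m := by
  rw [qP_succ', qP_succ, mul_ne_zero_iff, mul_ne_zero_iff] at h
  obtain ⟨h₁, h₂, h₃⟩ := h
  rw [ramanujanTerm, ramanujanTerm, ramanujanTerm, triangular_succ, qP_succ q q m, qP_succ' (z * q),
    qP_succ' (z * q), qP_succ (z * q * q)]
  -- as an atom, `c` is recognised by `field_simp` as the nonzero denominator `h₃`
  set c := 1 - z * q * q * q ^ m with hc
  field_simp
  rw [hc]
  ring

theorem sum_range_qBinom_mul_ramanujanTerm (hq : ¬IsOfFinOrder q) (M : ℕ)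
    (hz : qP (z * q) q (M + 1) ≠ 0) :
    ∑ m ∈ range (M + 1), qBinom q M m * ramanujanTerm q z m = 1 / (1 - z * q ^ (M + 1)) := by
  induction M generalizing z with
  | zero =>
    simp [qBinom, ramanujanTerm, qP]
  | succ M ih =>
    have hshift : ∀ m ∈ range (M + 1), qBinom q M m * (q ^ m * ramanujanTerm q z m +
        ramanujanTerm q z (m + 1)) = qBinom q M m * ramanujanTerm q (z * q) m := fun m hm => by
      rw [ramanujanTerm_shift m (qP_ne_zero_of_le (by simp at hm; omega) hz)]
    have hzq : qP (z * q * q) q (M + 1) ≠ 0 := by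
      rw [qP_succ'] at hz
      exact right_ne_zero_of_mul hz
    rw [sum_range_qBinom_succ hq, sum_congr rfl hshift, ih hzq, mul_assoc, ← pow_succ']

theorem sum_range_qBinom_mul_ramanujanSummand (hq : ¬IsOfFinOrder q) (N : ℕ)
    (hz : qP (z * q) q N ≠ 0) :
    ∑ n ∈ range (N + 1), qBinom q N n * ramanujanSummand q z n =
      ∑ n ∈ Icc 1 N, z * q ^ n / (1 - z * q ^ n) := by
  induction N generalizing z with
  | zero =>
    simp [ramanujanSummand_zero]
  | succ N ih =>
    have hstep : ∀ m ∈ range (N + 1), qBinom q N m * (q ^ (N - m) * ramanujanSummand q z (m + 1)) =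
        z * q ^ (N + 1) * (qBinom q N m * ramanujanTerm q z m) := fun m hm => by
      have hpow : q ^ (N + 1) = q ^ (N - m) * q ^ (m + 1) := by
        have := mem_range.mp hm
        rw [← pow_add]
        congr 1
        omega
      rw [ramanujanSummand_succ hq, hpow]
      ring
    rw [sum_range_qBinom_succ' hq, sum_Icc_succ_top (by omega)]
    simp only [mul_add, sum_add_distrib]
    rw [ih (qP_ne_zero_of_le N.le_succ hz), sum_congr rfl hstep, ← mul_sum,
      sum_range_qBinom_mul_ramanujanTerm hq N hz]
    ring

end Ramanujan

theorem stmt_4_general (N : ℕ) (q z : ℂ) (hq : ‖q‖ < 1)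
    (hz : ∀ n, 1 ≤ n → n ≤ N → z * q ^ n ≠ 1) :
    ∑ n ∈ Finset.Icc 1 N,
        qBinom q N n * ((-1) ^ (n - 1) * z ^ n * q ^ (n * (n + 1) / 2) * qP q q n /
          ((1 - q ^ n) * qP (z * q) q n)) =
      ∑ n ∈ Finset.Icc 1 N, z * q ^ n / (1 - z * q ^ n) := by
  have hq' : ¬IsOfFinOrder q := fun h => hq.ne h.norm_eq_one
  have hz' : qP (z * q) q N ≠ 0 := qP_ne_zero fun k hk => by
    rw [mul_assoc, ← pow_succ']
    exact hz (k + 1) (by omega) hk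
  rw [← sum_range_qBinom_mul_ramanujanSummand hq' N hz', Nat.range_succ_eq_Icc_zero,
    Icc_eq_cons_Ioc N.zero_le, sum_cons, ramanujanSummand_zero, mul_zero, zero_add]
  rfl

/-- Finite analogue of Ramanujan's identity. -/
theorem stmt_4 (N : ℕ) (hN : 1 ≤ N) (q z : ℂ) (hq : ‖q‖ < 1)
    (hz : ∀ n, 1 ≤ n → n ≤ N → z * q ^ n ≠ 1) :
    ∑ n ∈ Finset.Icc 1 N,
        qBinom q N n * ((-1) ^ (n - 1) * z ^ n * q ^ (n * (n + 1) / 2) * qP q q n /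
          ((1 - q ^ n) * qP (z * q) q n)) =
      ∑ n ∈ Finset.Icc 1 N, z * q ^ n / (1 - z * q ^ n) :=
  stmt_4_general N q z hq hz
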